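/- arXiv:2604.02152 — 5 statements merged into one kernel-verified Lean document; each statement's English description precedes it below -/
import Mathlib

section
/- Let q be a power of a prime p and f a positive integer with p ∤ f. Then there exists ω₀ ∈ F_q \ {0} such that ω₀ ∉ ℘(F_{q^f}), where ℘(x) = x^p − x. -/
/-!
The absolute trace `Tr_{M/𝔽_p}` is invariant under Frobenius, so it vanishes on every
`x ^ p - x`. On the image of `K` it equals `f • Tr_{K/𝔽_p}`, and `Tr_{K/𝔽_p}` is surjective, so an
element `ω₀` of trace `1` has `Tr_{M/𝔽_p} (i ω₀) = f ≠ 0` in `𝔽_p`.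
-/

open Module

theorem Algebra.trace_pow_card {F L : Type*} [Field F] [Fintype F] [Field L] [Algebra F L]
    [Algebra.IsAlgebraic F L] (x : L) :
    Algebra.trace F L (x ^ Fintype.card F) = Algebra.trace F L x := by
  rw [← FiniteField.frobeniusAlgEquivOfAlgebraic_apply, trace_eq_of_algEquiv]

theorem Algebra.trace_algebraMap_of_isScalarTower {R S T : Type*} [CommRing R] [CommRing S]
    [CommRing T] [Algebra R S] [Algebra R T] [Algebra S T] [IsScalarTower R S T]
    [Module.Free R S] [Module.Finite R S] [Module.Free S T] [Module.Finite S T]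
    [StrongRankCondition S] (a : S) :
    trace R T (algebraMap S T a) = finrank S T • trace R S a := by
  rw [← trace_trace (S := S), trace_algebraMap, map_nsmul]

theorem FiniteField.exists_ne_zero_forall_pow_card_sub_ne_algebraMap (F K L : Type*) [Field F]
    [Fintype F] [Field K] [Finite K] [Field L] [Finite L] [Algebra F K] [Algebra F L]
    [Algebra K L] [IsScalarTower F K L] (h : (finrank K L : F) ≠ 0) :
    ∃ ω : K, ω ≠ 0 ∧ ∀ x : L, x ^ Fintype.card F - x ≠ algebraMap K L ω := by
  obtain ⟨ω, hω⟩ := Algebra.trace_surjective F K 1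
  refine ⟨ω, ?_, fun x hx => h ?_⟩
  · rintro rfl
    simp at hω
  · have htrace : Algebra.trace F L (x ^ Fintype.card F - x) = 0 := by
      rw [map_sub, Algebra.trace_pow_card, sub_self]
    rwa [hx, Algebra.trace_algebraMap_of_isScalarTower, hω, nsmul_one] at htrace

theorem exists_nonzero_not_artin_schreier_general (p r f : ℕ) (hp : p.Prime)
    (hpf : ¬ p ∣ f) (K M : Type*) [Field K] [Field M] [Fintype K]
    [Fintype M] (hK : Fintype.card K = p ^ r) (hM : Fintype.card M = (p ^ r) ^ f)
    (i : K →+* M) :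
    ∃ ω₀ : K, ω₀ ≠ 0 ∧ ∀ x : M, x ^ p - x ≠ i ω₀ := by
  have : Fact p.Prime := ⟨hp⟩
  have : CharP K p := charP_of_card_eq_prime_pow hK
  have : CharP M p := charP_of_card_eq_prime_pow (hM.trans (pow_mul p r f).symm)
  let := ZMod.algebra K p
  let := ZMod.algebra M p
  let := i.toAlgebra
  have : IsScalarTower (ZMod p) K M := .of_algebraMap_eq' (Subsingleton.elim _ _)
  have hfinrank : finrank K M = f := by
    rw [card_eq_pow_finrank (K := K), hK] at hM
    exact Nat.pow_right_injective (hK ▸ Fintype.one_lt_card) hM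
  have := FiniteField.exists_ne_zero_forall_pow_card_sub_ne_algebraMap (ZMod p) K M
    (by rwa [hfinrank, Ne, ZMod.natCast_eq_zero_iff])
  rwa [ZMod.card] at this

/-- Let `q = p^r` be a power of a prime `p` and `f` a positive integer with `p ∤ f`.
Then there exists a nonzero `ω₀` in the field with `q` elements which is not in the
image of the Artin–Schreier map `x ↦ x^p − x` on the field with `q^f` elements. -/
theorem exists_nonzero_not_artin_schreier (p r f : ℕ) (hp : p.Prime) (hr : 0 < r)
    (hf : 0 < f) (hpf : ¬ p ∣ f) (K M : Type*) [Field K] [Field M] [Fintype K]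
    [Fintype M] (hK : Fintype.card K = p ^ r) (hM : Fintype.card M = (p ^ r) ^ f)
    (i : K →+* M) :
    ∃ ω₀ : K, ω₀ ≠ 0 ∧ ∀ x : M, x ^ p - x ≠ i ω₀ :=
  exists_nonzero_not_artin_schreier_general p r f hp hpf K M hK hM i
end

section
/- Let G be an abelian group generated by elements σ₁, σ₂ with ord(σ₁) = e, σ₂^f = σ₁^r, and |G| = ef. Then ord(σ₂) = f · e / gcd(e, r), and G is cyclic if and only if gcd(e, f, r) = 1. -/
/-!
Modulo `⟨σ₁⟩` the group is cyclic of order `f`, generated by the image of `σ₂`, so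
`f ∣ ord(σ₂)`; comparing the orders of the two sides of `σ₂ ^ f = σ₁ ^ r` then gives
`ord(σ₂) = f · e / gcd(e, r)`. A finite abelian group is cyclic iff its exponent equals its
order, and here the exponent is `lcm(e, ord σ₂)`. Writing `d = gcd(e, r)` and `e = d k`,
this lcm is `lcm(d, f) · k`, which equals `e f = d f k` iff `gcd(d, f) = gcd(e, f, r) = 1`.
-/

open Subgroup

section PairGenerated

variable {G : Type*} [CommGroup G] {a b : G}

theorem Subgroup.closure_pair_eq_sup_zpowers (a b : G) :
    closure ({a, b} : Set G) = zpowers a ⊔ zpowers b := by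
  rw [Set.insert_eq, closure_union, zpowers_eq_closure, zpowers_eq_closure]

theorem mk_mem_zpowers_mk_of_closure_pair_eq_top (hgen : closure ({a, b} : Set G) = ⊤)
    (g : G) : (g : G ⧸ zpowers a) ∈ zpowers (b : G ⧸ zpowers a) := by
  have hg : g ∈ zpowers a ⊔ zpowers b := closure_pair_eq_sup_zpowers a b ▸ hgen ▸ mem_top g
  obtain ⟨x, hx, y, hy, rfl⟩ := mem_sup.mp hg
  obtain ⟨i, rfl⟩ := mem_zpowers_iff.mp hx
  obtain ⟨j, rfl⟩ := mem_zpowers_iff.mp hy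
  rw [QuotientGroup.mk_mul, (QuotientGroup.eq_one_iff _).mpr (zpow_mem_zpowers a i), one_mul,
    QuotientGroup.mk_zpow]
  exact zpow_mem_zpowers _ j

theorem orderOf_mul_orderOf_mk_eq_card (hgen : closure ({a, b} : Set G) = ⊤) :
    orderOf a * orderOf (b : G ⧸ zpowers a) = Nat.card G := by
  rw [orderOf_eq_card_of_forall_mem_zpowers (QuotientGroup.mk_surjective.forall.mpr
      (mk_mem_zpowers_mk_of_closure_pair_eq_top hgen)),
    card_eq_card_quotient_mul_card_subgroup (zpowers a), Nat.card_zpowers, mul_comm]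

theorem exponent_eq_lcm_orderOf_of_closure_pair_eq_top (hgen : closure ({a, b} : Set G) = ⊤) :
    Monoid.exponent G = Nat.lcm (orderOf a) (orderOf b) := by
  refine Nat.dvd_antisymm (Monoid.exponent_dvd_of_forall_pow_eq_one fun g ↦ ?_)
    (Nat.lcm_dvd (Monoid.order_dvd_exponent a) (Monoid.order_dvd_exponent b))
  have hle : closure ({a, b} : Set G) ≤ (powMonoidHom (Nat.lcm (orderOf a) (orderOf b))).ker := by
    rw [closure_le]
    rintro x (rfl | rfl | _)
    · exact orderOf_dvd_iff_pow_eq_one.mp (Nat.dvd_lcm_left _ _)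
    · exact orderOf_dvd_iff_pow_eq_one.mp (Nat.dvd_lcm_right _ _)
  exact hle (hgen ▸ mem_top g)

end PairGenerated

theorem orderOf_eq_mul_div_gcd_of_pow_eq {G : Type*} [LeftCancelMonoid G] [Finite G] {a b : G}
    {f r : ℕ}
    (hdvd : f ∣ orderOf b) (hpow : b ^ f = a ^ r) :
    orderOf b = f * (orderOf a / Nat.gcd (orderOf a) r) := by
  have h := congrArg orderOf hpow
  rw [orderOf_pow, orderOf_pow, Nat.gcd_eq_right hdvd] at h
  rw [← h, Nat.mul_div_cancel' hdvd]

theorem Nat.lcm_mul_div_gcd_eq_mul_iff {e f r : ℕ} (he : e ≠ 0) (hf : f ≠ 0) :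
    Nat.lcm e (f * (e / Nat.gcd e r)) = e * f ↔ Nat.gcd (Nat.gcd e f) r = 1 := by
  obtain ⟨k, hk⟩ := Nat.gcd_dvd_left e r
  have hd : Nat.gcd e r ≠ 0 := Nat.gcd_ne_zero_left he
  have hk0 : k ≠ 0 := by rintro rfl; exact he (by simpa using hk)
  have hgcd : Nat.gcd (Nat.gcd e f) r = Nat.gcd (Nat.gcd e r) f := by
    rw [Nat.gcd_assoc, Nat.gcd_comm f r, ← Nat.gcd_assoc]
  set d := Nat.gcd e r
  have hlcm : Nat.lcm e (f * (e / d)) = Nat.lcm d f * k := by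
    rw [hk, Nat.mul_div_cancel_left k (Nat.pos_of_ne_zero hd), Nat.mul_comm f k,
      ← Nat.lcm_mul_right, Nat.mul_comm k f]
  rw [hlcm, hgcd, hk, Nat.mul_right_comm, Nat.mul_left_inj hk0, Nat.lcm_eq_mul_iff]
  simp [hd, hf]

theorem order_sigma2_and_cyclic_iff_general (G : Type*) [CommGroup G] [Fintype G]
    (σ₁ σ₂ : G) (e f r : ℕ)
    (hcard : Fintype.card G = e * f)
    (hgen : Subgroup.closure ({σ₁, σ₂} : Set G) = ⊤)
    (hord : orderOf σ₁ = e)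
    (h3 : σ₂ ^ f = σ₁ ^ r) :
    orderOf σ₂ = f * e / Nat.gcd e r ∧ (IsCyclic G ↔ Nat.gcd (Nat.gcd e f) r = 1) := by
  have he : e ≠ 0 := hord ▸ (orderOf_pos σ₁).ne'
  have hquot : orderOf (σ₂ : G ⧸ zpowers σ₁) = f := by
    have h := orderOf_mul_orderOf_mk_eq_card hgen
    rw [Nat.card_eq_fintype_card, hcard, hord] at h
    exact Nat.eq_of_mul_eq_mul_left (Nat.pos_of_ne_zero he) h
  have hf : f ≠ 0 := hquot ▸ (orderOf_pos _).ne'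
  have hσ₂ : orderOf σ₂ = f * (e / Nat.gcd e r) :=
    hord ▸ orderOf_eq_mul_div_gcd_of_pow_eq (hquot ▸ orderOf_map_dvd (QuotientGroup.mk' _) σ₂) h3
  refine ⟨by rw [hσ₂, Nat.mul_div_assoc _ (Nat.gcd_dvd_left e r)], ?_⟩
  rw [IsCyclic.iff_exponent_eq_card, exponent_eq_lcm_orderOf_of_closure_pair_eq_top hgen, hord,
    hσ₂, Nat.card_eq_fintype_card, hcard]
  exact Nat.lcm_mul_div_gcd_eq_mul_iff he hf

/-- Let `G` be an abelian group of order `ef`, generated by `σ₁, σ₂` with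
`ord(σ₁) = e` and `σ₂^f = σ₁^r`. Then `ord(σ₂) = f * e / gcd(e, r)` and `G` is
cyclic iff `gcd(e, f, r) = 1`. -/
theorem order_sigma2_and_cyclic_iff (G : Type*) [CommGroup G] [Fintype G]
    (σ₁ σ₂ : G) (e f r : ℕ) (he : 0 < e) (hf : 0 < f) (hr : 0 < r)
    (hcard : Fintype.card G = e * f)
    (hgen : Subgroup.closure ({σ₁, σ₂} : Set G) = ⊤)
    (hord : orderOf σ₁ = e)
    (h3 : σ₂ ^ f = σ₁ ^ r) :
    orderOf σ₂ = f * e / Nat.gcd e r ∧ (IsCyclic G ↔ Nat.gcd (Nat.gcd e f) r = 1) :=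
  order_sigma2_and_cyclic_iff_general G σ₁ σ₂ e f r hcard hgen hord h3
end

section
/- Let G be an abelian group of order ef generated by σ₁, σ₂ with ord(σ₁) = e, σ₂^f = σ₁^r, gcd(e, f, r) = 1 and gcd(e, r) > 1. Define N as the product of all primes ℓ with ℓ | e and ℓ ∤ r. Then the element σ₁^N σ₂ has order ef, i.e. it generates G. -/
/-- Let `G` be an abelian group of order `ef` generated by `σ₁, σ₂` with
`ord(σ₁) = e`, `σ₂^f = σ₁^r`, `gcd(e,f,r) = 1` and `gcd(e,r) > 1`. Let `N` be the
product of all primes `ℓ` with `ℓ ∣ e` and `ℓ ∤ r`. Then `σ₁^N σ₂` has order `ef`,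
i.e. it generates `G`. -/
theorem generator_sigma1N_sigma2 (G : Type*) [CommGroup G] [Fintype G]
    (σ₁ σ₂ : G) (e f r : ℕ) (he : 0 < e) (hf : 0 < f) (hr : 0 < r)
    (hcard : Fintype.card G = e * f)
    (hgen : Subgroup.closure ({σ₁, σ₂} : Set G) = ⊤)
    (hord : orderOf σ₁ = e)
    (h3 : σ₂ ^ f = σ₁ ^ r)
    (hgcd1 : Nat.gcd (Nat.gcd e f) r = 1)
    (hgcd2 : 1 < Nat.gcd e r)
    (N : ℕ) (hN : N = ∏ l ∈ e.primeFactors.filter (fun l => ¬ l ∣ r), l) :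
    orderOf (σ₁ ^ N * σ₂) = e * f := by
  have he1 : 1 < e := lt_of_lt_of_le hgcd2 (Nat.le_of_dvd he (Nat.gcd_dvd_left e r))
  -- key coprimality
  have hcop : Nat.Coprime (N * f + r) e := by
    by_contra h
    obtain ⟨p, hp, hpd⟩ := Nat.exists_prime_and_dvd h
    have hpe : p ∣ e := hpd.trans (Nat.gcd_dvd_right _ _)
    have hps : p ∣ N * f + r := hpd.trans (Nat.gcd_dvd_left _ _)
    by_cases hpr : p ∣ r
    · have hpf : ¬ p ∣ f := by
        intro hpf
        have hd1 : p ∣ 1 := hgcd1 ▸ Nat.dvd_gcd (Nat.dvd_gcd hpe hpf) hpr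
        exact hp.one_lt.ne' (Nat.eq_one_of_dvd_one hd1)
      have hpN : ¬ p ∣ N := by
        intro hdvd
        rw [hN] at hdvd
        obtain ⟨l, hl, hpl⟩ := hp.prime.exists_mem_finset_dvd hdvd
        rw [Finset.mem_filter, Nat.mem_primeFactors] at hl
        have hpl' : p = l := (Nat.prime_dvd_prime_iff_eq hp hl.1.1).mp hpl
        exact hl.2 (hpl' ▸ hpr)
      have hNf : p ∣ N * f := by
        have := Nat.dvd_sub hps hpr
        simpa using this
      rcases hp.dvd_mul.mp hNf with h' | h'
      · exact hpN h'
      · exact hpf h'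
    · have hpN : p ∣ N := by
        rw [hN]
        exact Finset.dvd_prod_of_mem _ (Finset.mem_filter.mpr
          ⟨Nat.mem_primeFactors.mpr ⟨hp, hpe, he.ne'⟩, hpr⟩)
      have : p ∣ r := by
        have h1 : p ∣ N * f := hpN.mul_right f
        have := Nat.dvd_sub hps h1
        simpa using this
      exact hpr this
  set τ := σ₁ ^ N * σ₂ with hτ
  have hτf : τ ^ f = σ₁ ^ (N * f + r) := by
    rw [hτ, mul_pow, ← pow_mul, h3, ← pow_add]
  obtain ⟨m, -, hm⟩ := Nat.exists_mul_mod_eq_one_of_coprime hcop he1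
  have h1 : σ₁ ∈ Subgroup.zpowers τ := by
    have key : (τ ^ f) ^ m = σ₁ := by
      rw [hτf, ← pow_mul, ← pow_mod_orderOf, hord, hm, pow_one]
    exact key ▸ Subgroup.pow_mem _ (Subgroup.pow_mem _ (Subgroup.mem_zpowers τ) f) m
  have h2 : σ₂ ∈ Subgroup.zpowers τ := by
    have key : σ₂ = (σ₁ ^ N)⁻¹ * τ := by rw [hτ]; group
    rw [key]
    exact Subgroup.mul_mem _ (Subgroup.inv_mem _ (Subgroup.pow_mem _ h1 N))
      (Subgroup.mem_zpowers τ)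
  have htop : Subgroup.zpowers τ = ⊤ := by
    rw [eq_top_iff, ← hgen, Subgroup.closure_le]
    intro x hx
    rcases hx with h | h
    · exact h ▸ h1
    · exact h ▸ h2
  rw [← Nat.card_zpowers τ, htop, ← hcard, ← Nat.card_eq_fintype_card]
  exact Subgroup.card_top
end

section
/- Let X > 1 be real and α₁, …, α_J : ℂ → ℂ be degree-one polynomials with real coefficients whose leading coefficients are negative. Then for real s large enough the nested sum ∑_{k₁ ≥ 0} X^{α₁(s)k₁} ∑_{0 ≤ k₂ < k₁} X^{α₂(s)k₂} ⋯ ∑_{0 ≤ k_J < k_{J−1}} X^{α_J(s)k_J} converges and equals (1 − X^{∑_{j=1}^J α_j(s)})^{−1} · ∏_{i=1}^{J−1} X^{∑_{j=1}^i α_j(s)} / (1 − X^{∑_{j=1}^i α_j(s)}). -/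
/-- The inner nested sum `∑_{0 ≤ k₂ < bound} X^{c₂ k₂} ∑_{0 ≤ k₃ < k₂} ⋯` over
strictly decreasing chains, for a list of real exponents `c`. -/
noncomputable def nestedTailSum (X : ℝ) : List ℝ → ℕ → ℝ
  | [], _ => 1
  | c :: rest, bound => ∑ k ∈ Finset.range bound, X ^ (c * k) * nestedTailSum X rest k

lemma nestedTailSum_nonneg {X : ℝ} (hX : 0 ≤ X) : ∀ (c : List ℝ) (k : ℕ),
    0 ≤ nestedTailSum X c k
  | [], _ => by simp [nestedTailSum]
  | c :: rest, k => by
    rw [nestedTailSum]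
    exact Finset.sum_nonneg fun i _ =>
      mul_nonneg (Real.rpow_nonneg hX _) (nestedTailSum_nonneg hX rest i)

/-- Sum of a tail of a geometric series, written with an `if`. -/
lemma geom_tail {r : ℝ} (hr0 : 0 ≤ r) (hr1 : r < 1) (m : ℕ) :
    Summable (fun k : ℕ => if m < k then r ^ k else 0) ∧
      (∑' k : ℕ, if m < k then r ^ k else 0) = r ^ (m + 1) * (1 - r)⁻¹ := by
  constructor
  · refine Summable.of_nonneg_of_le (fun k => ?_) (fun k => ?_)
      (summable_geometric_of_lt_one hr0 hr1)
    · split <;> positivity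
    · split
      · exact le_rfl
      · positivity
  · have hinj : Function.Injective (fun j : ℕ => j + (m + 1)) := fun x y h => by
      simpa using h
    have hsupp : Function.support (fun x : ℕ => if m < x then r ^ x else 0) ⊆
        Set.range (fun j : ℕ => j + (m + 1)) := by
      intro x hx
      rw [Function.mem_support] at hx
      have hmx : m < x := by by_contra h; simp [h] at hx
      exact ⟨x - (m + 1), by simp; omega⟩
    calc (∑' k : ℕ, if m < k then r ^ k else 0)
        = ∑' j : ℕ, (if m < j + (m + 1) then r ^ (j + (m + 1)) else 0) :=
          (hinj.tsum_eq hsupp).symm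
      _ = ∑' j : ℕ, r ^ j * r ^ (m + 1) := by
          congr 1; funext j
          rw [if_pos (by omega), pow_add]
      _ = (∑' j : ℕ, r ^ j) * r ^ (m + 1) := tsum_mul_right
      _ = r ^ (m + 1) * (1 - r)⁻¹ := by
          rw [tsum_geometric_of_lt_one hr0 hr1]; ring

/-- The key closed-form computation, by induction on the list of exponents. -/
lemma nested_key (X : ℝ) (hX : 1 < X) :
    ∀ (c : List ℝ) (c₀ : ℝ), (∀ i, i ≤ c.length → c₀ + (c.take i).sum < 0) →
      Summable (fun k : ℕ => X ^ (c₀ * k) * nestedTailSum X c k) ∧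
      (∑' k : ℕ, X ^ (c₀ * k) * nestedTailSum X c k) =
        (1 - X ^ (c₀ + c.sum))⁻¹ *
          ∏ i ∈ Finset.range c.length,
            X ^ (c₀ + (c.take i).sum) / (1 - X ^ (c₀ + (c.take i).sum)) := by
  have hX0 : (0 : ℝ) < X := lt_trans zero_lt_one hX
  intro c
  induction c with
  | nil =>
    intro c₀ H
    have hc₀ : c₀ < 0 := by simpa using H 0 (le_refl 0)
    have hr0 : (0 : ℝ) ≤ X ^ c₀ := Real.rpow_nonneg hX0.le _
    have hr1 : X ^ c₀ < 1 := Real.rpow_lt_one_of_one_lt_of_neg hX hc₀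
    have hrw : (fun k : ℕ => X ^ (c₀ * k) * nestedTailSum X [] k)
        = fun k : ℕ => (X ^ c₀) ^ k := by
      funext k
      rw [show nestedTailSum X [] k = 1 from rfl, mul_one, Real.rpow_mul hX0.le,
        Real.rpow_natCast]
    rw [hrw]
    refine ⟨summable_geometric_of_lt_one hr0 hr1, ?_⟩
    simp [tsum_geometric_of_lt_one hr0 hr1]
  | cons c₁ rest IH =>
    intro c₀ H
    have hc₀ : c₀ < 0 := by simpa using H 0 (Nat.zero_le _)
    set r : ℝ := X ^ c₀ with hr_def
    have hr0 : 0 < r := Real.rpow_pos_of_pos hX0 _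
    have hr1 : r < 1 := Real.rpow_lt_one_of_one_lt_of_neg hX hc₀
    have h1r : 0 < 1 - r := by linarith
    -- instantiate the induction hypothesis with head `c₀ + c₁`
    obtain ⟨hSg, hTg⟩ := IH (c₀ + c₁) (by
      intro i hi
      have := H (i + 1) (by simpa using Nat.succ_le_succ hi)
      simpa [List.take_succ_cons, add_assoc] using this)
    set f : ℕ → ℝ := fun m => X ^ (c₁ * m) * nestedTailSum X rest m with hf_def
    set g : ℕ → ℝ := fun m => X ^ ((c₀ + c₁) * m) * nestedTailSum X rest m with hg_def
    have hf0 : ∀ m, 0 ≤ f m := fun m =>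
      mul_nonneg (Real.rpow_nonneg hX0.le _) (nestedTailSum_nonneg hX0.le rest m)
    set F : ℕ × ℕ → ℝ := fun p => if p.1 < p.2 then X ^ (c₀ * p.2) * f p.1 else 0
      with hF_def
    have hrk : ∀ k : ℕ, X ^ (c₀ * k) = r ^ k := fun k => by
      rw [hr_def, Real.rpow_mul hX0.le, Real.rpow_natCast]
    have hF0 : ∀ p, 0 ≤ F p := by
      intro p
      rw [hF_def]
      dsimp only
      split
      · exact mul_nonneg (Real.rpow_nonneg hX0.le _) (hf0 _)
      · exact le_rfl
    have hFeq : ∀ m k, F (m, k) = f m * (if m < k then r ^ k else 0) := by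
      intro m k
      rw [hF_def]
      dsimp only
      split
      · rw [hrk]; ring
      · ring
    -- slice sums (over the outer index, for fixed inner index m)
    have hslice_sum : ∀ m, Summable (fun k => F (m, k)) := by
      intro m
      have := ((geom_tail hr0.le hr1 m).1).mul_left (f m)
      refine this.congr fun k => (hFeq m k).symm
    have hslice_val : ∀ m, (∑' k, F (m, k)) = f m * (r ^ (m + 1) * (1 - r)⁻¹) := by
      intro m
      calc (∑' k, F (m, k)) = ∑' k, f m * (if m < k then r ^ k else 0) := by
            congr 1; funext k; exact hFeq m k
        _ = f m * ∑' k : ℕ, (if m < k then r ^ k else 0) := tsum_mul_left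
        _ = f m * (r ^ (m + 1) * (1 - r)⁻¹) := by rw [(geom_tail hr0.le hr1 m).2]
    have houter : ∀ m, f m * (r ^ (m + 1) * (1 - r)⁻¹) = (r * (1 - r)⁻¹) * g m := by
      intro m
      have : r ^ m * f m = g m := by
        rw [← hrk, hf_def, hg_def]
        dsimp only
        rw [← mul_assoc, ← Real.rpow_add hX0]
        ring_nf
      calc f m * (r ^ (m + 1) * (1 - r)⁻¹)
          = (r * (1 - r)⁻¹) * (r ^ m * f m) := by ring
        _ = (r * (1 - r)⁻¹) * g m := by rw [this]
    have houter_sum : Summable (fun m => ∑' k, F (m, k)) := by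
      refine (hSg.mul_left (r * (1 - r)⁻¹)).congr fun m => ?_
      rw [hslice_val m, houter m]
    have hFsum : Summable F :=
      (summable_prod_of_nonneg hF0).2 ⟨hslice_sum, houter_sum⟩
    have hFswap : Summable (fun p : ℕ × ℕ => F p.swap) := hFsum.prod_symm
    -- identify the target function with the fiberwise sums
    have htgt : ∀ k : ℕ, X ^ (c₀ * k) * nestedTailSum X (c₁ :: rest) k
        = ∑' m, F (m, k) := by
      intro k
      have h1 : (∑' m, F (m, k)) = ∑ m ∈ Finset.range k, F (m, k) :=
        tsum_eq_sum (fun m hm => by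
          rw [hF_def]; exact if_neg (by simpa using hm))
      rw [h1, show nestedTailSum X (c₁ :: rest) k
          = ∑ m ∈ Finset.range k, f m from rfl, Finset.mul_sum]
      refine Finset.sum_congr rfl fun m hm => ?_
      rw [hF_def]
      exact (if_pos (Finset.mem_range.1 hm)).symm
    have hswap_slice : ∀ k, Summable (fun m => F (m, k)) := by
      intro k
      refine summable_of_ne_finset_zero (s := Finset.range k) fun m hm => ?_
      rw [hF_def]
      exact if_neg (by simpa using hm)
    have hSummTgt : Summable (fun k : ℕ => X ^ (c₀ * k) * nestedTailSum X (c₁ :: rest) k) := by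
      have := ((summable_prod_of_nonneg (fun p : ℕ × ℕ => hF0 p.swap)).1 hFswap).2
      refine this.congr fun k => ?_
      rw [htgt k]
      exact tsum_congr fun m => by rw [Prod.swap_prod_mk]
    refine ⟨hSummTgt, ?_⟩
    have hmain : (∑' k : ℕ, X ^ (c₀ * k) * nestedTailSum X (c₁ :: rest) k)
        = (r * (1 - r)⁻¹) * ∑' m, g m := by
      calc (∑' k : ℕ, X ^ (c₀ * k) * nestedTailSum X (c₁ :: rest) k)
          = ∑' k, ∑' m, F (m, k) := by congr 1; funext k; exact htgt k
        _ = ∑' p : ℕ × ℕ, F p.swap := by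
            rw [Summable.tsum_prod' hFswap (fun k => hswap_slice k)]
            exact tsum_congr fun k => tsum_congr fun m => by rw [Prod.swap_prod_mk]
        _ = ∑' p : ℕ × ℕ, F p := (Equiv.prodComm ℕ ℕ).tsum_eq F
        _ = ∑' m, ∑' k, F (m, k) := Summable.tsum_prod' hFsum hslice_sum
        _ = ∑' m, (r * (1 - r)⁻¹) * g m := by
            congr 1; funext m; rw [hslice_val m, houter m]
        _ = (r * (1 - r)⁻¹) * ∑' m, g m := tsum_mul_left
    rw [hmain, hTg]
    -- final algebraic rearrangement
    have hprod : ∏ i ∈ Finset.range (c₁ :: rest).length,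
        X ^ (c₀ + ((c₁ :: rest).take i).sum) / (1 - X ^ (c₀ + ((c₁ :: rest).take i).sum))
        = (∏ i ∈ Finset.range rest.length,
            X ^ ((c₀ + c₁) + (rest.take i).sum) / (1 - X ^ ((c₀ + c₁) + (rest.take i).sum)))
          * (r / (1 - r)) := by
      rw [List.length_cons, Finset.prod_range_succ']
      congr 1
      · refine Finset.prod_congr rfl fun i _ => ?_
        rw [List.take_succ_cons, List.sum_cons, add_assoc]
      · simp [hr_def]
    rw [hprod, List.sum_cons]
    rw [show c₀ + (c₁ + rest.sum) = c₀ + c₁ + rest.sum by ring]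
    field_simp

/-- Sums of prefixes of `List.ofFn`. -/
lemma sum_take_ofFn : ∀ (i n : ℕ) (f : ℕ → ℝ), i ≤ n →
    ((List.ofFn (fun j : Fin n => f j)).take i).sum = ∑ j ∈ Finset.range i, f j
  | 0, n, f, _ => by simp
  | i + 1, n, f, hn => by
    obtain ⟨m, rfl⟩ : ∃ m, n = m + 1 := ⟨n - 1, by omega⟩
    rw [List.ofFn_succ, List.take_succ_cons, List.sum_cons]
    have heq : (List.ofFn fun j : Fin m => f ↑(Fin.succ j))
        = List.ofFn (fun j : Fin m => (fun x => f (x + 1)) ↑j) := by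
      congr 1
    rw [heq, sum_take_ofFn i m (fun x => f (x + 1)) (by omega), Finset.sum_range_succ']
    simp [add_comm]

/-- Potthast's lemma: for `X > 1` and degree-one polynomials `αᵢ(s) = aᵢ − bᵢ s`
with `bᵢ > 0`, for all sufficiently large real `s` the nested sum
`∑_{k₁ ≥ 0} X^{α₁(s)k₁} ∑_{0 ≤ k₂ < k₁} X^{α₂(s)k₂} ⋯ ∑_{0 ≤ k_J < k_{J−1}} X^{α_J(s)k_J}`
converges and equals
`(1 − X^{∑_{j=1}^J α_j(s)})⁻¹ ∏_{i=1}^{J−1} X^{∑_{j≤i} α_j(s)} / (1 − X^{∑_{j≤i} α_j(s)})`.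
Here the outermost level is `α 0` and there are `n + 1 = J` levels in total. -/
theorem nested_geometric_sum_formula (X : ℝ) (hX : 1 < X) (n : ℕ)
    (a b : ℕ → ℝ) (hb : ∀ i, 0 < b i) :
    ∃ s₀ : ℝ, ∀ s : ℝ, s₀ < s →
      Summable (fun k : ℕ => X ^ ((a 0 - b 0 * s) * k) *
        nestedTailSum X (List.ofFn (fun i : Fin n => a (i + 1) - b (i + 1) * s)) k) ∧
      (∑' k : ℕ, X ^ ((a 0 - b 0 * s) * k) *
          nestedTailSum X (List.ofFn (fun i : Fin n => a (i + 1) - b (i + 1) * s)) k) =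
        (1 - X ^ (∑ j ∈ Finset.range (n + 1), (a j - b j * s)))⁻¹ *
          ∏ i ∈ Finset.range n,
            X ^ (∑ j ∈ Finset.range (i + 1), (a j - b j * s)) /
              (1 - X ^ (∑ j ∈ Finset.range (i + 1), (a j - b j * s))) := by
  -- eventual negativity of all partial sums
  have h1 : ∀ i : ℕ, ∀ᶠ s : ℝ in Filter.atTop,
      (∑ j ∈ Finset.range (i + 1), (a j - b j * s)) < 0 := by
    intro i
    have hB : 0 < ∑ j ∈ Finset.range (i + 1), b j :=
      Finset.sum_pos (fun j _ => hb j) ⟨0, Finset.mem_range.2 (Nat.succ_pos _)⟩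
    filter_upwards [Filter.eventually_gt_atTop
      ((∑ j ∈ Finset.range (i + 1), a j) / (∑ j ∈ Finset.range (i + 1), b j))] with s hs
    have hA : (∑ j ∈ Finset.range (i + 1), a j) < s * (∑ j ∈ Finset.range (i + 1), b j) :=
      (div_lt_iff₀ hB).1 hs
    have : ∑ j ∈ Finset.range (i + 1), (a j - b j * s)
        = (∑ j ∈ Finset.range (i + 1), a j) - (∑ j ∈ Finset.range (i + 1), b j) * s := by
      rw [Finset.sum_sub_distrib, ← Finset.sum_mul]
    rw [this]
    nlinarith [hA]
  have h2 : ∀ᶠ s : ℝ in Filter.atTop, ∀ i ∈ Finset.range (n + 1),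
      (∑ j ∈ Finset.range (i + 1), (a j - b j * s)) < 0 :=
    (Filter.eventually_all_finset _).2 fun i _ => h1 i
  obtain ⟨s₀, hs₀⟩ := Filter.eventually_atTop.1 h2
  refine ⟨s₀, fun s hs => ?_⟩
  have hneg : ∀ i ≤ n, (∑ j ∈ Finset.range (i + 1), (a j - b j * s)) < 0 :=
    fun i hi => hs₀ s hs.le i (Finset.mem_range.2 (Nat.lt_succ_of_le hi))
  set c : List ℝ := List.ofFn (fun i : Fin n => a (i + 1) - b (i + 1) * s) with hc_def
  have hlen : c.length = n := by rw [hc_def, List.length_ofFn]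
  have hP : ∀ i, i ≤ n → (a 0 - b 0 * s) + (c.take i).sum
      = ∑ j ∈ Finset.range (i + 1), (a j - b j * s) := by
    intro i hi
    rw [hc_def, sum_take_ofFn i n (fun j => a (j + 1) - b (j + 1) * s) hi,
      Finset.sum_range_succ']
    ring
  obtain ⟨hS, hT⟩ := nested_key X hX c (a 0 - b 0 * s) (by
    intro i hi
    rw [hlen] at hi
    rw [hP i hi]
    exact hneg i hi)
  refine ⟨hS, ?_⟩
  rw [hT]
  have hctot : (a 0 - b 0 * s) + c.sum = ∑ j ∈ Finset.range (n + 1), (a j - b j * s) := by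
    have := hP n le_rfl
    rwa [show c.take n = c by rw [← hlen]; exact List.take_length (l := c)] at this
  rw [hctot, hlen]
  refine congrArg _ (Finset.prod_congr rfl fun i hi => ?_)
  rw [hP i (Finset.mem_range.1 hi).le]
end

section
/- Let p ≥ 2, and let r₁, …, r_J ≥ 1 be integers with partial sums R_j = r₁ + ⋯ + r_j and reversed partial sums S_j = r_J + ⋯ + r_{J−j+1}. Define σ_j = (p−1) S_j / (pd (p^{R_J} − p^{R_{J−j}})) for a fixed positive integer d. Then σ_j < σ_{j+1} for all 1 ≤ j < J; in particular the maximum of σ₁, …, σ_J is σ_J = ((p−1)/(pd)) · R_J / (p^{R_J} − 1). -/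
/-- Key real inequality: `s(p^r − 1) < r·p^r·(p^s − 1)` for `p ≥ 2`, `r, s ≥ 1`. -/
lemma key_ineq (p : ℝ) (hp : 2 ≤ p) (s t : ℕ) (hs : 1 ≤ s) (ht : 1 ≤ t) :
    (s : ℝ) * (p ^ t - 1) < t * p ^ t * (p ^ s - 1) := by
  have hp0 : (0 : ℝ) < p := by linarith
  have hpt : (1 : ℝ) ≤ p ^ t := one_le_pow₀ (by linarith)
  have h1 : p ^ t - 1 < (t : ℝ) * p ^ t := by
    have : (1 : ℝ) * p ^ t ≤ (t : ℝ) * p ^ t := by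
      apply mul_le_mul_of_nonneg_right _ (by linarith)
      exact_mod_cast ht
    nlinarith
  have h2 : (s : ℝ) ≤ p ^ s - 1 := by
    have h2' : (s : ℝ) + 1 ≤ 2 ^ s := by
      exact_mod_cast Nat.lt_two_pow_self (n := s)
    have h2'' : (2 : ℝ) ^ s ≤ p ^ s := pow_le_pow_left₀ (by norm_num) hp s
    linarith
  have hs0 : (0 : ℝ) < s := by exact_mod_cast hs
  calc (s : ℝ) * (p ^ t - 1) < (s : ℝ) * ((t : ℝ) * p ^ t) :=
        mul_lt_mul_of_pos_left h1 hs0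
    _ ≤ (p ^ s - 1) * ((t : ℝ) * p ^ t) := by
        apply mul_le_mul_of_nonneg_right h2
        positivity
    _ = t * p ^ t * (p ^ s - 1) := by ring

/-- For `p ≥ 2`, `d ≥ 1` and positive integers `r₁, …, r_J` with partial sums
`R_j = r₁ + ⋯ + r_j` and reversed partial sums `S_j = r_J + ⋯ + r_{J−j+1}`, the
quantities `σ_j = (p−1)S_j / (pd(p^{R_J} − p^{R_{J−j}}))` are strictly increasing
in `j`; in particular their maximum is `σ_J = ((p−1)/(pd))·R_J/(p^{R_J} − 1)`. -/
theorem poles_strictly_increasing (p d J : ℕ) (hp : 2 ≤ p) (hd : 1 ≤ d)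
    (hJ : 1 ≤ J) (r : ℕ → ℕ) (hr : ∀ i < J, 1 ≤ r i) :
    (∀ j, 1 ≤ j → j < J →
      ((p : ℝ) - 1) * (∑ i ∈ Finset.Ico (J - j) J, r i) /
          ((p * d) * ((p : ℝ) ^ (∑ i ∈ Finset.range J, r i) -
            (p : ℝ) ^ (∑ i ∈ Finset.range (J - j), r i))) <
        ((p : ℝ) - 1) * (∑ i ∈ Finset.Ico (J - (j + 1)) J, r i) /
          ((p * d) * ((p : ℝ) ^ (∑ i ∈ Finset.range J, r i) -
            (p : ℝ) ^ (∑ i ∈ Finset.range (J - (j + 1)), r i)))) ∧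
    ((p : ℝ) - 1) * (∑ i ∈ Finset.Ico (J - J) J, r i) /
        ((p * d) * ((p : ℝ) ^ (∑ i ∈ Finset.range J, r i) -
          (p : ℝ) ^ (∑ i ∈ Finset.range (J - J), r i))) =
      (((p : ℝ) - 1) / (p * d)) * (∑ i ∈ Finset.range J, r i) /
        ((p : ℝ) ^ (∑ i ∈ Finset.range J, r i) - 1) := by
  have hpR : (2 : ℝ) ≤ (p : ℝ) := by exact_mod_cast hp
  have hpd : (0 : ℝ) < (p : ℝ) * d := by
    have : (1 : ℝ) ≤ (d : ℝ) := by exact_mod_cast hd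
    nlinarith
  constructor
  · intro j hj1 hjJ
    set n := J - (j + 1) with hn
    have hnj : J - j = n + 1 := by omega
    have hn1J : n + 1 < J := by omega
    -- sums
    set R1 := ∑ i ∈ Finset.range n, r i with hR1
    set t := r n with ht
    set s := ∑ i ∈ Finset.Ico (n + 1) J, r i with hsdef
    have ht1 : 1 ≤ t := hr n (by omega)
    have hs1 : 1 ≤ s := by
      have hmem : J - 1 ∈ Finset.Ico (n + 1) J := by
        simp [Finset.mem_Ico]; omega
      calc 1 ≤ r (J - 1) := hr (J - 1) (by omega)
        _ ≤ s := Finset.single_le_sum (f := fun i => r i) (fun i _ => Nat.zero_le _) hmem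
    have hsumJ : ∑ i ∈ Finset.range J, r i = R1 + t + s := by
      rw [Finset.range_eq_Ico, ← Finset.sum_Ico_consecutive _ (Nat.zero_le (n + 1)) (le_of_lt hn1J),
        ← Finset.range_eq_Ico, Finset.sum_range_succ]
    have hsum1 : ∑ i ∈ Finset.range (n + 1), r i = R1 + t := Finset.sum_range_succ r n
    have hIco : ∑ i ∈ Finset.Ico n J, r i = t + s := by
      rw [Finset.sum_eq_sum_Ico_succ_bot (by omega) r]
    rw [hnj, hsumJ, hsum1, hIco]
    -- positivity of denominators
    have hp1 : (1 : ℝ) < (p : ℝ) := by linarith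
    have hden1 : (0 : ℝ) < (p : ℝ) ^ (R1 + t + s) - (p : ℝ) ^ (R1 + t) :=
      sub_pos.mpr (pow_lt_pow_right₀ hp1 (by omega))
    have hden2 : (0 : ℝ) < (p : ℝ) ^ (R1 + t + s) - (p : ℝ) ^ R1 :=
      sub_pos.mpr (pow_lt_pow_right₀ hp1 (by omega))
    rw [div_lt_div_iff₀ (by positivity) (by positivity)]
    have key := key_ineq (p : ℝ) hpR s t hs1 ht1
    have hP : (0 : ℝ) < ((p : ℝ) - 1) * ((p : ℝ) * d) * (p : ℝ) ^ R1 :=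
      mul_pos (mul_pos (by linarith) hpd) (by positivity)
    have key2 := mul_lt_mul_of_pos_left key hP
    rw [Nat.cast_add, pow_add, pow_add]
    nlinarith [key2]
  · -- the j = J statement
    simp only [Nat.sub_self, Finset.range_zero, Finset.sum_empty, pow_zero]
    rw [Finset.range_eq_Ico]
    rw [div_mul_eq_mul_div, div_div]
end
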